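/- arXiv:2503.20177 — 5 statements merged into one kernel-verified Lean document; each statement's English description precedes it below -/
import Mathlib

section
/- Let Γ be a positive definite symmetric n×n real matrix and S a symmetric n×n real matrix. Then 0 ⪯ S ⪯ Γ (i.e., S is positive semidefinite and Γ - S is positive semidefinite) if and only if S·Γ⁻¹·(S - Γ) ⪯ 0 (i.e., S Γ⁻¹ S - S is negative semidefinite). -/
open Matrix

private lemma dp_self_nonneg {n : ℕ} (v : Fin n → ℝ) : 0 ≤ v ⬝ᵥ v :=
  Finset.sum_nonneg fun _ _ => mul_self_nonneg _

private lemma conj_psd_iff {n : ℕ} {A M : Matrix (Fin n) (Fin n) ℝ} (hA : IsUnit A.det) :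
    (Aᴴ * M * A).PosSemidef ↔ M.PosSemidef := by
  constructor
  · intro h
    have h2 := h.conjTranspose_mul_mul_same A⁻¹
    have e : (A⁻¹)ᴴ * (Aᴴ * M * A) * A⁻¹ = (A * A⁻¹)ᴴ * M * (A * A⁻¹) := by
      simp only [conjTranspose_mul, Matrix.mul_assoc]
    rw [e, mul_nonsing_inv _ hA, conjTranspose_one, Matrix.one_mul, Matrix.mul_one] at h2
    exact h2
  · intro h
    exact h.conjTranspose_mul_mul_same A

private lemma key {n : ℕ} {T : Matrix (Fin n) (Fin n) ℝ} (hT : T.IsHermitian) :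
    (T.PosSemidef ∧ ((1 : Matrix (Fin n) (Fin n) ℝ) - T).PosSemidef) ↔
      (T - T * T).PosSemidef := by
  constructor
  · rintro ⟨h1, h2⟩
    obtain ⟨R, hR, hRR⟩ : ∃ R : Matrix (Fin n) (Fin n) ℝ, R.PosSemidef ∧ R * R = T :=
      by open scoped MatrixOrder in exact ⟨CFC.sqrt T, (CFC.sqrt_nonneg T).posSemidef,
        CFC.sqrt_mul_sqrt_self T h1.nonneg⟩
    have hRT : R * T * R = T * T := by
      rw [← hRR]; simp only [Matrix.mul_assoc]
    have e : T - T * T = R * (1 - T) * Rᴴ := by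
      rw [hR.isHermitian.eq, Matrix.mul_sub, Matrix.mul_one, Matrix.sub_mul, hRR, hRT]
    rw [e]
    exact h2.mul_mul_conjTranspose_same _
  · intro h
    have hsx : ∀ x : Fin n → ℝ, star x = x := fun x => funext fun _ => star_trivial _
    have hTT : ∀ x : Fin n → ℝ, star x ⬝ᵥ (T * T) *ᵥ x = (T *ᵥ x) ⬝ᵥ (T *ᵥ x) := by
      intro x
      rw [hsx, ← mulVec_mulVec, dotProduct_mulVec, ← mulVec_transpose,
        ← conjTranspose_eq_transpose_of_trivial, hT.eq]
    have hTpsd : T.PosSemidef := by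
      refine .of_dotProduct_mulVec_nonneg hT fun x => ?_
      have h1 := h.dotProduct_mulVec_nonneg x
      rw [sub_mulVec, dotProduct_sub, hTT x] at h1
      have h2 := dp_self_nonneg (T *ᵥ x)
      linarith
    refine ⟨hTpsd, .of_dotProduct_mulVec_nonneg (isHermitian_one.sub hT) fun x => ?_⟩
    have h1 := h.dotProduct_mulVec_nonneg x
    rw [sub_mulVec, dotProduct_sub, hTT x] at h1
    rw [sub_mulVec, dotProduct_sub, one_mulVec, hsx]
    rw [hsx] at h1
    set a := x ⬝ᵥ T *ᵥ x with ha
    set b := x ⬝ᵥ x with hb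
    set c := (T *ᵥ x) ⬝ᵥ (T *ᵥ x) with hc
    have ha0 : 0 ≤ a := by have := hTpsd.dotProduct_mulVec_nonneg x; rwa [hsx] at this
    have hb0 : (0:ℝ) ≤ b := dp_self_nonneg x
    have hq : ∀ t : ℝ, 0 ≤ b - 2*t*a + t^2*c := by
      intro t
      have h2 := dp_self_nonneg (x - t • (T *ᵥ x))
      have e : (x - t • (T *ᵥ x)) ⬝ᵥ (x - t • (T *ᵥ x)) = b - 2*t*a + t^2*c := by
        rw [ha, hb, hc]
        simp only [sub_dotProduct, dotProduct_sub, smul_dotProduct, dotProduct_smul,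
          smul_eq_mul]
        rw [dotProduct_comm (T *ᵥ x) x]
        ring
      linarith [e ▸ h2]
    rcases eq_or_lt_of_le (dp_self_nonneg (T *ᵥ x)) with hc0 | hc0
    · have hTx : T *ᵥ x = 0 := dotProduct_self_eq_zero.mp hc0.symm
      have haz : a = 0 := by rw [ha, hTx, dotProduct_zero]
      linarith
    · have h4 := hq (a/c)
      have e1 : b - 2*(a/c)*a + (a/c)^2*c = b - a^2/c := by
        field_simp; ring
      rw [e1] at h4
      have h3 : a^2 ≤ b*c := by
        rw [sub_nonneg, div_le_iff₀ hc0] at h4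
        linarith
      nlinarith [mul_nonneg hb0 h1]

theorem stmt0 {n : ℕ} (Γ S : Matrix (Fin n) (Fin n) ℝ)
    (hΓ : Γ.PosDef) (hS : S.IsSymm) :
    (S.PosSemidef ∧ (Γ - S).PosSemidef) ↔ (-(S * Γ⁻¹ * (S - Γ))).PosSemidef := by
  obtain ⟨P, hP, hPP⟩ : ∃ P : Matrix (Fin n) (Fin n) ℝ, P.PosSemidef ∧ P * P = Γ :=
    by open scoped MatrixOrder in exact ⟨CFC.sqrt Γ, (CFC.sqrt_nonneg Γ).posSemidef,
      CFC.sqrt_mul_sqrt_self Γ hΓ.posSemidef.nonneg⟩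
  have hdet : IsUnit P.det := by
    have h1 : P.det * P.det = Γ.det := by rw [← det_mul, hPP]
    have h2 : Γ.det ≠ 0 := hΓ.det_pos.ne'
    exact isUnit_iff_ne_zero.mpr fun h => h2 (by rw [← h1, h, mul_zero])
  have hPH : Pᴴ = P := hP.isHermitian.eq
  have hQdet : IsUnit P⁻¹.det := P.isUnit_nonsing_inv_det hdet
  have hQH : (P⁻¹)ᴴ = P⁻¹ := by rw [conjTranspose_nonsing_inv, hPH]
  have hPQ : P * P⁻¹ = 1 := mul_nonsing_inv _ hdet
  have hQP : P⁻¹ * P = 1 := nonsing_inv_mul _ hdet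
  have hΓinv : Γ⁻¹ = P⁻¹ * P⁻¹ := by rw [← hPP, Matrix.mul_inv_rev]
  set T : Matrix (Fin n) (Fin n) ℝ := P⁻¹ * S * P⁻¹ with hTdef
  have hSH : Sᴴ = S := by
    rw [conjTranspose_eq_transpose_of_trivial, hS.eq]
  have hTH : T.IsHermitian := by
    rw [Matrix.IsHermitian, hTdef, conjTranspose_mul, conjTranspose_mul, hSH, hQH,
      Matrix.mul_assoc]
  -- S psd ↔ T psd
  have hiff1 : S.PosSemidef ↔ T.PosSemidef := by
    rw [show T = (P⁻¹)ᴴ * S * P⁻¹ by rw [hQH], conj_psd_iff hQdet]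
  -- Γ - S psd ↔ 1 - T psd
  have hiff2 : (Γ - S).PosSemidef ↔ ((1 : Matrix (Fin n) (Fin n) ℝ) - T).PosSemidef := by
    rw [show (1 : Matrix (Fin n) (Fin n) ℝ) - T = (P⁻¹)ᴴ * (Γ - S) * P⁻¹ by
      rw [hQH, Matrix.mul_sub, Matrix.sub_mul, ← hPP]
      congr 1
      rw [← Matrix.mul_assoc, hQP, Matrix.one_mul, hPQ],
      conj_psd_iff hQdet]
  -- -(S * Γ⁻¹ * (S - Γ)) psd ↔ T - T*T psd
  have hiff3 : (-(S * Γ⁻¹ * (S - Γ))).PosSemidef ↔ (T - T * T).PosSemidef := by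
    rw [show T - T * T = (P⁻¹)ᴴ * (-(S * Γ⁻¹ * (S - Γ))) * P⁻¹ by
      rw [hQH, hΓinv, hTdef]
      have : S * (P⁻¹ * P⁻¹) * (S - (P * P)) = S * P⁻¹ * P⁻¹ * S - S * P⁻¹ * P⁻¹ * (P * P) := by
        rw [Matrix.mul_sub]; simp only [Matrix.mul_assoc]
      rw [← hPP, this]
      have e2 : S * P⁻¹ * P⁻¹ * (P * P) = S := by
        rw [Matrix.mul_assoc (S * P⁻¹) _ _, ← Matrix.mul_assoc P⁻¹ P P, hQP, Matrix.one_mul,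
          Matrix.mul_assoc, hQP, Matrix.mul_one]
      rw [e2, neg_sub, Matrix.mul_sub, Matrix.sub_mul]
      simp only [Matrix.mul_assoc],
      conj_psd_iff hQdet]
  rw [hiff1, hiff2, hiff3, key hTH]
end

section
/- Let P ∈ S₊ⁿ, A_cl ∈ ℝⁿˣⁿ, B_cl ∈ ℝⁿˣᵐ, Θ ∈ S₊ᵐ, G ∈ ℝⁿˣᵐ, η > 0. If the block matrix [[⟨PA_cl⟩ + 2ηP, PB_cl + G], [B_clᵀP + Gᵀ, -2Θ]] ⪯ 0, then for every Δx ∈ ℝⁿ and ΔΨ ∈ ℝᵐ with ΔΨᵀΘΔΨ ≤ ΔΨᵀGᵀΔx, one has ΔxᵀP(A_clΔx + B_clΔΨ) ≤ -η ΔxᵀPΔx. -/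
/-!
Evaluating the quadratic form of the LMI matrix at `(Δx, ΔΨ)` gives
`2 (Δxᵀ P (A_cl Δx + B_cl ΔΨ) + η ΔxᵀPΔx) + 2 (ΔxᵀGΔΨ - ΔΨᵀΘΔΨ) ≤ 0`,
and the incremental sector bound says exactly that the second bracket is nonnegative.
-/

open Matrix

section

variable {R ι κ : Type*} [Fintype ι] [Fintype κ]

theorem Matrix.sumElim_dotProduct_fromBlocks_mulVec [NonUnitalNonAssocSemiring R]
    (A : Matrix ι ι R) (B : Matrix ι κ R) (C : Matrix κ ι R) (D : Matrix κ κ R)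
    (x : ι → R) (y : κ → R) :
    Sum.elim x y ⬝ᵥ fromBlocks A B C D *ᵥ Sum.elim x y =
      x ⬝ᵥ A *ᵥ x + x ⬝ᵥ B *ᵥ y + (y ⬝ᵥ C *ᵥ x + y ⬝ᵥ D *ᵥ y) := by
  rw [fromBlocks_mulVec, Sum.elim_comp_inl, Sum.elim_comp_inr, sumElim_dotProduct_sumElim,
    dotProduct_add, dotProduct_add]

theorem Matrix.sumElim_dotProduct_fromBlocks_transpose_mulVec [CommSemiring R]
    (A : Matrix ι ι R) (B : Matrix ι κ R) (D : Matrix κ κ R) (x : ι → R) (y : κ → R) :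
    Sum.elim x y ⬝ᵥ fromBlocks A B Bᵀ D *ᵥ Sum.elim x y =
      x ⬝ᵥ A *ᵥ x + 2 * (x ⬝ᵥ B *ᵥ y) + y ⬝ᵥ D *ᵥ y := by
  rw [sumElim_dotProduct_fromBlocks_mulVec, dotProduct_transpose_mulVec]
  ring

theorem sumElim_dotProduct_contractionLMI_mulVec [CommRing R]
    (P A : Matrix ι ι R) (B G : Matrix ι κ R) (Θ : Matrix κ κ R) (η : R) (x : ι → R) (ψ : κ → R) :
    Sum.elim x ψ ⬝ᵥ fromBlocks (P * A + (P * A)ᵀ + (2 * η) • P) (P * B + G) (P * B + G)ᵀ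
        (-(2 : R) • Θ) *ᵥ Sum.elim x ψ =
      2 * (x ⬝ᵥ P *ᵥ (A *ᵥ x + B *ᵥ ψ) + η * (x ⬝ᵥ P *ᵥ x) + (x ⬝ᵥ G *ᵥ ψ - ψ ⬝ᵥ Θ *ᵥ ψ)) := by
  simp only [sumElim_dotProduct_fromBlocks_transpose_mulVec, add_mulVec, smul_mulVec,
    dotProduct_add, dotProduct_smul, dotProduct_transpose_mulVec, ← mulVec_mulVec, mulVec_add,
    smul_eq_mul]
  ring

end

theorem stmt8_general {n m : ℕ} (P Acl : Matrix (Fin n) (Fin n) ℝ) (Bcl G : Matrix (Fin n) (Fin m) ℝ)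
    (Θ : Matrix (Fin m) (Fin m) ℝ) (η : ℝ)
    (hLMI : (-(Matrix.fromBlocks
        (P * Acl + (P * Acl)ᵀ + (2 * η) • P) (P * Bcl + G)
        (P * Bcl + G)ᵀ (-(2 : ℝ) • Θ))).PosSemidef) :
    ∀ (Δx : Fin n → ℝ) (ΔΨ : Fin m → ℝ),
      ΔΨ ⬝ᵥ Θ.mulVec ΔΨ ≤ ΔΨ ⬝ᵥ Gᵀ.mulVec Δx →
      Δx ⬝ᵥ P.mulVec (Acl.mulVec Δx + Bcl.mulVec ΔΨ) ≤ -η * (Δx ⬝ᵥ P.mulVec Δx) := by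
  intro Δx ΔΨ hsector
  have hnonpos := hLMI.dotProduct_mulVec_nonneg (Sum.elim Δx ΔΨ)
  rw [star_trivial, neg_mulVec, dotProduct_neg, sumElim_dotProduct_contractionLMI_mulVec] at hnonpos
  rw [dotProduct_transpose_mulVec] at hsector
  linarith

theorem stmt8 {n m : ℕ} (P Acl : Matrix (Fin n) (Fin n) ℝ) (Bcl G : Matrix (Fin n) (Fin m) ℝ)
    (Θ : Matrix (Fin m) (Fin m) ℝ) (η : ℝ) (hη : 0 < η) (hP : P.PosDef) (hΘ : Θ.PosDef)
    (hLMI : (-(Matrix.fromBlocks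
        (P * Acl + (P * Acl)ᵀ + (2 * η) • P) (P * Bcl + G)
        (P * Bcl + G)ᵀ (-(2 : ℝ) • Θ))).PosSemidef) :
    ∀ (Δx : Fin n → ℝ) (ΔΨ : Fin m → ℝ),
      ΔΨ ⬝ᵥ Θ.mulVec ΔΨ ≤ ΔΨ ⬝ᵥ Gᵀ.mulVec Δx →
      Δx ⬝ᵥ P.mulVec (Acl.mulVec Δx + Bcl.mulVec ΔΨ) ≤ -η * (Δx ⬝ᵥ P.mulVec Δx) :=
  stmt8_general P Acl Bcl G Θ η hLMI
end

section
/- Let P ∈ S₊ⁿ (symmetric positive definite), A_cl ∈ ℝⁿˣⁿ, B_cl ∈ ℝⁿˣᵐ, Θ_Ψ ∈ S₊ᵐ, Θ_y ∈ S₊ᵖ, C ∈ ℝᵖˣⁿ, ρ > 0, 0 < η < 1. If the block matrix [[A_clᵀPA_cl - η²P + ρ²CᵀΘ_yC, A_clᵀPB_cl], [B_clᵀPA_cl, B_clᵀPB_cl - Θ_Ψ]] ⪯ 0, then for all Δx ∈ ℝⁿ and ΔΨ ∈ ℝᵐ with ΔΨᵀΘ_ΨΔΨ ≤ ρ²(CΔx)ᵀΘ_y(CΔx),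 one has (A_clΔx + B_clΔΨ)ᵀP(A_clΔx + B_clΔΨ) ≤ η² ΔxᵀPΔx. -/
open Matrix

namespace Matrix

variable {ι κ ν R : Type*}

theorem transpose_fromCols_mul_mul_fromCols [Fintype ν] [Semiring R] (P : Matrix ν ν R)
    (A : Matrix ν ι R) (B : Matrix ν κ R) :
    (fromCols A B)ᵀ * P * fromCols A B =
      fromBlocks (Aᵀ * P * A) (Aᵀ * P * B) (Bᵀ * P * A) (Bᵀ * P * B) := by
  rw [transpose_fromCols, fromRows_mul, fromRows_mul_fromCols]

theorem sumElim_dotProduct_fromBlocks_zero_mulVec [Fintype ι] [Fintype κ] [Semiring R] (Q : Matrix ι ι R)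
    (S : Matrix κ κ R) (x : ι → R) (y : κ → R) :
    Sum.elim x y ⬝ᵥ fromBlocks Q 0 0 S *ᵥ Sum.elim x y = x ⬝ᵥ Q *ᵥ x + y ⬝ᵥ S *ᵥ y := by
  simp only [fromBlocks_mulVec, zero_mulVec, add_zero, zero_add, Sum.elim_comp_inl,
    Sum.elim_comp_inr, sumElim_dotProduct_sumElim]

theorem dotProduct_mulVec_add_le_of_posSemidef_neg_fromBlocks
    [Fintype ι] [Fintype κ] [Fintype ν] [CommRing R] [PartialOrder R] [IsOrderedRing R] [StarRing R] [TrivialStar R]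
    {P : Matrix ν ν R} {A : Matrix ν ι R} {B : Matrix ν κ R} {Q : Matrix ι ι R} {S : Matrix κ κ R}
    (hLMI : (-(fromBlocks (Aᵀ * P * A - Q) (Aᵀ * P * B) (Bᵀ * P * A) (Bᵀ * P * B - S))).PosSemidef)
    (x : ι → R) (y : κ → R) :
    (A *ᵥ x + B *ᵥ y) ⬝ᵥ P *ᵥ (A *ᵥ x + B *ᵥ y) ≤ x ⬝ᵥ Q *ᵥ x + y ⬝ᵥ S *ᵥ y := by
  -- With `F = fromCols A B`, `F (x, y) = A x + B y` and the LMI matrix is `diag(Q, S) - Fᵀ P F`.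
  have hsplit : -(fromBlocks (Aᵀ * P * A - Q) (Aᵀ * P * B) (Bᵀ * P * A) (Bᵀ * P * B - S)) =
      fromBlocks Q 0 0 S - (fromCols A B)ᵀ * P * fromCols A B := by
    rw [transpose_fromCols_mul_mul_fromCols, sub_eq_add_neg (fromBlocks Q 0 0 S),
      fromBlocks_neg, fromBlocks_neg, fromBlocks_add]
    congr 1 <;> abel
  have hz := hLMI.dotProduct_mulVec_nonneg (Sum.elim x y)
  rwa [hsplit, star_trivial, sub_mulVec, dotProduct_sub, sub_nonneg,
    sumElim_dotProduct_fromBlocks_zero_mulVec, ← mulVec_mulVec, ← mulVec_mulVec,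
    dotProduct_mulVec, vecMul_transpose, fromCols_mulVec_sumElim] at hz

end Matrix

theorem stmt9_general {n m p : ℕ} (P Acl : Matrix (Fin n) (Fin n) ℝ) (Bcl : Matrix (Fin n) (Fin m) ℝ)
    (ΘΨ : Matrix (Fin m) (Fin m) ℝ) (Θy : Matrix (Fin p) (Fin p) ℝ) (C : Matrix (Fin p) (Fin n) ℝ)
    (ρ η : ℝ)
    (hLMI : (-(Matrix.fromBlocks
        (Aclᵀ * P * Acl - η ^ 2 • P + ρ ^ 2 • (Cᵀ * Θy * C)) (Aclᵀ * P * Bcl)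
        (Bclᵀ * P * Acl) (Bclᵀ * P * Bcl - ΘΨ))).PosSemidef) :
    ∀ (Δx : Fin n → ℝ) (ΔΨ : Fin m → ℝ),
      ΔΨ ⬝ᵥ ΘΨ.mulVec ΔΨ ≤ ρ ^ 2 * ((C.mulVec Δx) ⬝ᵥ Θy.mulVec (C.mulVec Δx)) →
      (Acl.mulVec Δx + Bcl.mulVec ΔΨ) ⬝ᵥ P.mulVec (Acl.mulVec Δx + Bcl.mulVec ΔΨ)
        ≤ η ^ 2 * (Δx ⬝ᵥ P.mulVec Δx) := by
  intro Δx ΔΨ hΨ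
  rw [sub_add] at hLMI
  have h := dotProduct_mulVec_add_le_of_posSemidef_neg_fromBlocks hLMI Δx ΔΨ
  rw [sub_mulVec, smul_mulVec, smul_mulVec, ← mulVec_mulVec, ← mulVec_mulVec, dotProduct_sub,
    dotProduct_smul, dotProduct_smul, dotProduct_mulVec Δx Cᵀ, vecMul_transpose] at h
  simp only [smul_eq_mul] at h
  linarith

theorem stmt9 {n m p : ℕ} (P Acl : Matrix (Fin n) (Fin n) ℝ) (Bcl : Matrix (Fin n) (Fin m) ℝ)
    (ΘΨ : Matrix (Fin m) (Fin m) ℝ) (Θy : Matrix (Fin p) (Fin p) ℝ) (C : Matrix (Fin p) (Fin n) ℝ)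
    (ρ η : ℝ) (hρ : 0 < ρ) (hη0 : 0 < η) (hη1 : η < 1)
    (hP : P.PosDef) (hΘΨ : ΘΨ.PosDef) (hΘy : Θy.PosDef)
    (hLMI : (-(Matrix.fromBlocks
        (Aclᵀ * P * Acl - η ^ 2 • P + ρ ^ 2 • (Cᵀ * Θy * C)) (Aclᵀ * P * Bcl)
        (Bclᵀ * P * Acl) (Bclᵀ * P * Bcl - ΘΨ))).PosSemidef) :
    ∀ (Δx : Fin n → ℝ) (ΔΨ : Fin m → ℝ),
      ΔΨ ⬝ᵥ ΘΨ.mulVec ΔΨ ≤ ρ ^ 2 * ((C.mulVec Δx) ⬝ᵥ Θy.mulVec (C.mulVec Δx)) →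
      (Acl.mulVec Δx + Bcl.mulVec ΔΨ) ⬝ᵥ P.mulVec (Acl.mulVec Δx + Bcl.mulVec ΔΨ)
        ≤ η ^ 2 * (Δx ⬝ᵥ P.mulVec Δx) :=
  stmt9_general P Acl Bcl ΘΨ Θy C ρ η hLMI
end

section
/- (S-lemma with strict feasibility) Let M, N be symmetric d×d real matrices. Suppose there exists z₀ ∈ ℝᵈ with z₀ᵀNz₀ > 0. Then (zᵀNz ≥ 0 implies zᵀMz ≤ 0, for all z ∈ ℝᵈ) if and only if there exists λ ≥ 0 such that M + λN ⪯ 0. -/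
/-!
For `l ≥ 0`, sort the maximisers of `z ↦ z ⬝ᵥ (M + l • N) *ᵥ z` on the Euclidean unit sphere by
the sign of `z ⬝ᵥ N *ᵥ z`. By compactness, the parameters admitting a maximiser with
`z ⬝ᵥ N *ᵥ z ≤ 0`, resp. `≥ 0`, form closed sets. The second contains all large `l` (thanks to
`z₀`); if it contains `0`, then `l = 0` works, as that maximiser has `z ⬝ᵥ M *ᵥ z ≤ 0`. Otherwise
the first contains `0`, and by connectedness of `[0, ∞)` some `l` has maximisers `p`, `q` of both
kinds. Both are eigenvectors of `M + l • N` for its top eigenvalue `φ`, hence so is every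
combination of them, and by the intermediate value theorem some nonzero combination `v` has
`v ⬝ᵥ N *ᵥ v = 0`. Then `v ⬝ᵥ M *ᵥ v = φ * (v ⬝ᵥ v)`, so the hypothesis forces `φ ≤ 0`, i.e.
`M + l • N` is negative semidefinite.
-/

open Matrix Set

lemma isClosed_setOf_isMaxOn {X Y : Type*} [TopologicalSpace X] [TopologicalSpace Y]
    {f : X → Y → ℝ} (hf : Continuous fun p : X × Y => f p.1 p.2) (s : Set Y) :
    IsClosed {p : X × Y | IsMaxOn (f p.1) s p.2} := by
  simp only [isMaxOn_iff, ofPred_forall]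
  exact isClosed_biInter fun y _ =>
    isClosed_le (hf.comp (continuous_fst.prodMk continuous_const)) hf

lemma IsCompact.isClosed_setOf_exists_mem {X Y : Type*} [TopologicalSpace X]
    [TopologicalSpace Y] {K : Set Y} (hK : IsCompact K) {P : Set (X × Y)} (hP : IsClosed P) :
    IsClosed {x | ∃ y ∈ K, (x, y) ∈ P} := by
  have : CompactSpace K := isCompact_iff_compactSpace.mp hK
  have hP' : IsClosed {p : X × K | (p.1, (p.2 : Y)) ∈ P} :=
    hP.preimage (continuous_fst.prodMk (continuous_subtype_val.comp continuous_snd))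
  convert isClosedMap_fst_of_compactSpace _ hP' using 1
  ext x
  simp

variable {n : Type*} [Fintype n]

/-- `Metric.sphere 0 1` in `n → ℝ` is the sphere of the sup norm, not this one. -/
def euclideanUnitSphere (n : Type*) [Fintype n] : Set (n → ℝ) := {z | z ⬝ᵥ z = 1}

lemma mem_euclideanUnitSphere {z : n → ℝ} : z ∈ euclideanUnitSphere n ↔ z ⬝ᵥ z = 1 :=
  Iff.rfl

lemma isCompact_euclideanUnitSphere : IsCompact (euclideanUnitSphere n) := by
  have : euclideanUnitSphere n = EuclideanSpace.equiv n ℝ '' Metric.sphere 0 1 := by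
    ext z
    rw [ContinuousLinearEquiv.image_eq_preimage_symm, mem_preimage, mem_sphere_zero_iff_norm,
      ← pow_eq_one_iff_of_nonneg (norm_nonneg _) two_ne_zero, EuclideanSpace.real_norm_sq_eq]
    simp [euclideanUnitSphere, dotProduct, sq]
  rw [this]
  exact (isCompact_sphere 0 1).image (EuclideanSpace.equiv n ℝ).continuous

lemma ne_zero_of_mem_euclideanUnitSphere {z : n → ℝ} (hz : z ∈ euclideanUnitSphere n) :
    z ≠ 0 := by
  rintro rfl
  simp [mem_euclideanUnitSphere] at hz

lemma exists_eq_smul_mem_euclideanUnitSphere {z : n → ℝ} (hz : z ≠ 0) :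
    ∃ r : ℝ, ∃ u ∈ euclideanUnitSphere n, z = r • u := by
  have hpos : 0 < z ⬝ᵥ z := by simpa using dotProduct_star_self_pos_iff.mpr hz
  have hr : √(z ⬝ᵥ z) ≠ 0 := (Real.sqrt_pos.mpr hpos).ne'
  refine ⟨√(z ⬝ᵥ z), (√(z ⬝ᵥ z))⁻¹ • z, ?_, by rw [smul_inv_smul₀ hr]⟩
  rw [mem_euclideanUnitSphere, smul_dotProduct, dotProduct_smul, smul_eq_mul, smul_eq_mul,
    ← mul_assoc, ← mul_inv, Real.mul_self_sqrt hpos.le, inv_mul_cancel₀ hpos.ne']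

namespace Matrix

lemma smul_dotProduct_mulVec_smul (A : Matrix n n ℝ) (c : ℝ) (z : n → ℝ) :
    (c • z) ⬝ᵥ A *ᵥ (c • z) = c ^ 2 * (z ⬝ᵥ A *ᵥ z) := by
  simp only [mulVec_smul, smul_dotProduct, dotProduct_smul, smul_eq_mul]
  ring

lemma dotProduct_add_smul_mulVec (M N : Matrix n n ℝ) (l : ℝ) (z : n → ℝ) :
    z ⬝ᵥ (M + l • N) *ᵥ z = z ⬝ᵥ M *ᵥ z + l * (z ⬝ᵥ N *ᵥ z) := by
  simp only [add_mulVec, smul_mulVec, dotProduct_add, dotProduct_smul, smul_eq_mul]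

lemma posSemidef_neg_iff {A : Matrix n n ℝ} (hA : A.IsSymm) :
    (-A).PosSemidef ↔ ∀ z, z ⬝ᵥ A *ᵥ z ≤ 0 := by
  rw [posSemidef_iff_dotProduct_mulVec, isHermitian_iff_isSymm]
  simp [hA.neg, neg_mulVec]

section Maximizers

variable {A : Matrix n n ℝ} {z : n → ℝ}

lemma dotProduct_mulVec_le_of_isMaxOn
    (hmax : IsMaxOn (fun w => w ⬝ᵥ A *ᵥ w) (euclideanUnitSphere n) z) (w : n → ℝ) :
    w ⬝ᵥ A *ᵥ w ≤ (z ⬝ᵥ A *ᵥ z) * (w ⬝ᵥ w) := by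
  rcases eq_or_ne w 0 with rfl | hw
  · simp
  obtain ⟨r, u, hu, rfl⟩ := exists_eq_smul_mem_euclideanUnitSphere hw
  have hAu : u ⬝ᵥ A *ᵥ u ≤ z ⬝ᵥ A *ᵥ z := hmax hu
  rw [smul_dotProduct_mulVec_smul, smul_dotProduct, dotProduct_smul,
    mem_euclideanUnitSphere.mp hu]
  simp only [smul_eq_mul]
  nlinarith [sq_nonneg r]

/-- The matrix `(z ⬝ᵥ A *ᵥ z) • 1 - A` is positive semidefinite and its quadratic form vanishes
at `z`, so it kills `z`. -/
lemma mulVec_eq_smul_of_isMaxOn (hA : A.IsSymm) (hz : z ∈ euclideanUnitSphere n)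
    (hmax : IsMaxOn (fun w => w ⬝ᵥ A *ᵥ w) (euclideanUnitSphere n) z) :
    A *ᵥ z = (z ⬝ᵥ A *ᵥ z) • z := by
  classical
  set φ := z ⬝ᵥ A *ᵥ z
  have hform (w : n → ℝ) : star w ⬝ᵥ (φ • 1 - A) *ᵥ w = φ * (w ⬝ᵥ w) - w ⬝ᵥ A *ᵥ w := by
    simp [sub_mulVec, smul_mulVec, dotProduct_sub]
  have hB : (φ • 1 - A).PosSemidef := by
    refine posSemidef_iff_dotProduct_mulVec.mpr ⟨?_, fun w => ?_⟩
    · exact isHermitian_iff_isSymm.mpr ((isSymm_one.smul φ).sub hA)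
    · rw [hform]
      linarith [dotProduct_mulVec_le_of_isMaxOn hmax w]
  have hBz := (hB.dotProduct_mulVec_zero_iff z).mp
    (by rw [hform, mem_euclideanUnitSphere.mp hz]; ring)
  rw [sub_mulVec, smul_mulVec, one_mulVec, sub_eq_zero] at hBz
  exact hBz.symm

end Maximizers

lemma exists_ne_zero_dotProduct_mulVec_eq_zero (N : Matrix n n ℝ) {p q : n → ℝ} (hp : p ≠ 0)
    (hq : q ≠ 0) (hNp : 0 ≤ p ⬝ᵥ N *ᵥ p) (hNq : q ⬝ᵥ N *ᵥ q ≤ 0) :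
    ∃ a b : ℝ, a • p + b • q ≠ 0 ∧ (a • p + b • q) ⬝ᵥ N *ᵥ (a • p + b • q) = 0 := by
  rcases hNq.eq_or_lt with hNq | hNq
  · exact ⟨0, 1, by simpa using hq, by simpa using hNq⟩
  obtain ⟨t, ht, hNt⟩ : ∃ t ∈ Icc (0 : ℝ) 1,
      ((1 - t) • p + t • q) ⬝ᵥ N *ᵥ ((1 - t) • p + t • q) = 0 :=
    intermediate_value_Icc' zero_le_one (by fun_prop) (by simpa using ⟨hNq.le, hNp⟩)
  refine ⟨1 - t, t, fun hv => ?_, hNt⟩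
  have hpq : (1 - t) • p = (-t) • q := by rw [neg_smul, ← sub_eq_zero, sub_neg_eq_add, hv]
  have hN := congrArg (fun x => x ⬝ᵥ N *ᵥ x) hpq
  simp only [smul_dotProduct_mulVec_smul, neg_sq] at hN
  have ht0 : t ^ 2 = 0 :=
    le_antisymm (nonpos_of_mul_nonneg_left (hN ▸ mul_nonneg (sq_nonneg _) hNp) hNq) (sq_nonneg t)
  simp [pow_eq_zero_iff two_ne_zero |>.mp ht0, hp] at hv

section SLemma

variable {M N : Matrix n n ℝ}

lemma dotProduct_add_smul_mulVec_nonpos_of_isMaxOn (hM : M.IsSymm) (hN : N.IsSymm)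
    (h : ∀ z, 0 ≤ z ⬝ᵥ N *ᵥ z → z ⬝ᵥ M *ᵥ z ≤ 0) {l : ℝ} {p q : n → ℝ}
    (hp : p ∈ euclideanUnitSphere n) (hq : q ∈ euclideanUnitSphere n)
    (hmaxp : IsMaxOn (fun z => z ⬝ᵥ (M + l • N) *ᵥ z) (euclideanUnitSphere n) p)
    (hmaxq : IsMaxOn (fun z => z ⬝ᵥ (M + l • N) *ᵥ z) (euclideanUnitSphere n) q)
    (hNp : 0 ≤ p ⬝ᵥ N *ᵥ p) (hNq : q ⬝ᵥ N *ᵥ q ≤ 0) :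
    p ⬝ᵥ (M + l • N) *ᵥ p ≤ 0 := by
  have hA : (M + l • N).IsSymm := hM.add (hN.smul l)
  set φ := p ⬝ᵥ (M + l • N) *ᵥ p
  have hφ : q ⬝ᵥ (M + l • N) *ᵥ q = φ := le_antisymm (hmaxp hq) (hmaxq hp)
  obtain ⟨a, b, hv, hNv⟩ := exists_ne_zero_dotProduct_mulVec_eq_zero N
    (ne_zero_of_mem_euclideanUnitSphere hp) (ne_zero_of_mem_euclideanUnitSphere hq) hNp hNq
  set v := a • p + b • q
  have hAv : (M + l • N) *ᵥ v = φ • v := by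
    rw [mulVec_add, mulVec_smul, mulVec_smul, mulVec_eq_smul_of_isMaxOn hA hp hmaxp,
      mulVec_eq_smul_of_isMaxOn hA hq hmaxq, hφ, smul_add, smul_comm a, smul_comm b]
  have hMv : v ⬝ᵥ M *ᵥ v = φ * (v ⬝ᵥ v) := by
    have := dotProduct_add_smul_mulVec M N l v
    rw [hAv, hNv, mul_zero, add_zero, dotProduct_smul, smul_eq_mul] at this
    exact this.symm
  by_contra! hφ_pos
  have hvv : 0 < v ⬝ᵥ v := by simpa using dotProduct_star_self_pos_iff.mpr hv
  linarith [h v hNv.ge, mul_pos hφ_pos hvv]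

lemma eventually_pos_of_isMaxOn {w₀ : n → ℝ} (hw₀ : w₀ ∈ euclideanUnitSphere n)
    (hNw₀ : 0 < w₀ ⬝ᵥ N *ᵥ w₀) :
    ∀ᶠ l : ℝ in Filter.atTop, ∀ z ∈ euclideanUnitSphere n,
      IsMaxOn (fun z => z ⬝ᵥ (M + l • N) *ᵥ z) (euclideanUnitSphere n) z →
        0 < z ⬝ᵥ N *ᵥ z := by
  obtain ⟨C, hC⟩ := isCompact_euclideanUnitSphere.bddAbove_image
    (f := fun z : n → ℝ => z ⬝ᵥ M *ᵥ z) (by fun_prop)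
  filter_upwards [Filter.eventually_gt_atTop ((C - w₀ ⬝ᵥ M *ᵥ w₀) / w₀ ⬝ᵥ N *ᵥ w₀),
    Filter.eventually_ge_atTop 0] with l hl hl₀ z hz hmax
  have hw₀z : w₀ ⬝ᵥ (M + l • N) *ᵥ w₀ ≤ z ⬝ᵥ (M + l • N) *ᵥ z := hmax hw₀
  rw [dotProduct_add_smul_mulVec, dotProduct_add_smul_mulVec] at hw₀z
  rw [div_lt_iff₀ hNw₀] at hl
  have hMz : z ⬝ᵥ M *ᵥ z ≤ C := hC (mem_image_of_mem _ hz)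
  by_contra! hNz
  nlinarith [mul_nonpos_of_nonneg_of_nonpos hl₀ hNz]

lemma isClosed_setOf_exists_isMaxOn_mem (M N : Matrix n n ℝ) {C : Set (n → ℝ)}
    (hC : IsClosed C) :
    IsClosed {l : ℝ | ∃ z ∈ euclideanUnitSphere n,
      IsMaxOn (fun z => z ⬝ᵥ (M + l • N) *ᵥ z) (euclideanUnitSphere n) z ∧ z ∈ C} := by
  have hF : Continuous fun p : ℝ × (n → ℝ) => p.2 ⬝ᵥ (M + p.1 • N) *ᵥ p.2 := by
    simp only [dotProduct_add_smul_mulVec]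
    fun_prop
  exact isCompact_euclideanUnitSphere.isClosed_setOf_exists_mem
    ((isClosed_setOf_isMaxOn (f := fun l z => z ⬝ᵥ (M + l • N) *ᵥ z) hF _).inter
      (hC.preimage continuous_snd))

theorem exists_nonneg_forall_dotProduct_add_smul_mulVec_nonpos (hM : M.IsSymm)
    (hN : N.IsSymm) (h₀ : ∃ z₀ : n → ℝ, 0 < z₀ ⬝ᵥ N *ᵥ z₀)
    (h : ∀ z, 0 ≤ z ⬝ᵥ N *ᵥ z → z ⬝ᵥ M *ᵥ z ≤ 0) :
    ∃ l : ℝ, 0 ≤ l ∧ ∀ z, z ⬝ᵥ (M + l • N) *ᵥ z ≤ 0 := by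
  set S := euclideanUnitSphere n
  set F : ℝ → (n → ℝ) → ℝ := fun l z => z ⬝ᵥ (M + l • N) *ᵥ z
  obtain ⟨z₀, hz₀⟩ := h₀
  obtain ⟨r, w₀, hw₀, rfl⟩ :=
    exists_eq_smul_mem_euclideanUnitSphere (z := z₀) (by rintro rfl; simp at hz₀)
  rw [smul_dotProduct_mulVec_smul] at hz₀
  have hmax (l : ℝ) : ∃ z ∈ S, IsMaxOn (F l) S z :=
    isCompact_euclideanUnitSphere.exists_isMaxOn ⟨w₀, hw₀⟩ (by fun_prop)
  suffices ∃ l, 0 ≤ l ∧ ∃ z, IsMaxOn (F l) S z ∧ F l z ≤ 0 by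
    obtain ⟨l, hl, z, hz, hFz⟩ := this
    exact ⟨l, hl, fun w => (dotProduct_mulVec_le_of_isMaxOn hz w).trans
      (mul_nonpos_of_nonpos_of_nonneg hFz (by simpa using dotProduct_star_self_nonneg w))⟩
  let U := {l | ∃ z ∈ S, IsMaxOn (F l) S z ∧ z ∈ {z | z ⬝ᵥ N *ᵥ z ≤ 0}}
  let V := {l | ∃ z ∈ S, IsMaxOn (F l) S z ∧ z ∈ {z | 0 ≤ z ⬝ᵥ N *ᵥ z}}
  have hU : IsClosed U :=
    isClosed_setOf_exists_isMaxOn_mem M N (isClosed_le (by fun_prop) (by fun_prop))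
  have hV : IsClosed V :=
    isClosed_setOf_exists_isMaxOn_mem M N (isClosed_le (by fun_prop) (by fun_prop))
  have hUV : Ici 0 ⊆ U ∪ V := fun l _ => by
    obtain ⟨z, hz, hzmax⟩ := hmax l
    rcases le_total (z ⬝ᵥ N *ᵥ z) 0 with hNz | hNz
    exacts [Or.inl ⟨z, hz, hzmax, hNz⟩, Or.inr ⟨z, hz, hzmax, hNz⟩]
  have hV_nonempty : (Ici 0 ∩ V).Nonempty := by
    obtain ⟨l, hlN, hl⟩ := ((eventually_pos_of_isMaxOn hw₀
      (pos_of_mul_pos_right hz₀ (sq_nonneg r))).and (Filter.eventually_ge_atTop 0)).exists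
    obtain ⟨z, hz, hzmax⟩ := hmax l
    exact ⟨l, hl, z, hz, hzmax, (hlN z hz hzmax).le⟩
  obtain ⟨z, hz, hzmax⟩ := hmax 0
  rcases le_total 0 (z ⬝ᵥ N *ᵥ z) with hNz | hNz
  · exact ⟨0, le_rfl, z, hzmax, by simpa [F] using h z hNz⟩
  obtain ⟨l, hl, ⟨q, hq, hmaxq, hNq⟩, ⟨p, hp, hmaxp, hNp⟩⟩ := isPreconnected_closed_iff.mp
    isPreconnected_Ici U V hU hV hUV ⟨0, self_mem_Ici, z, hz, hzmax, hNz⟩ hV_nonempty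
  exact ⟨l, hl, p, hmaxp,
    dotProduct_add_smul_mulVec_nonpos_of_isMaxOn hM hN h hp hq hmaxp hmaxq hNp hNq⟩

end SLemma

end Matrix

theorem stmt10 {d : ℕ} (M N : Matrix (Fin d) (Fin d) ℝ) (hM : M.IsSymm) (hN : N.IsSymm)
    (h0 : ∃ z₀ : Fin d → ℝ, 0 < z₀ ⬝ᵥ N.mulVec z₀) :
    (∀ z : Fin d → ℝ, 0 ≤ z ⬝ᵥ N.mulVec z → z ⬝ᵥ M.mulVec z ≤ 0) ↔
      ∃ l : ℝ, 0 ≤ l ∧ (-(M + l • N)).PosSemidef := by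
  simp only [fun l : ℝ => posSemidef_neg_iff (hM.add (hN.smul l))]
  refine ⟨exists_nonneg_forall_dotProduct_add_smul_mulVec_nonpos hM hN h0, ?_⟩
  rintro ⟨l, hl, hMN⟩ z hNz
  have := hMN z
  rw [dotProduct_add_smul_mulVec] at this
  nlinarith [mul_nonneg hl hNz]
end

section
/- Let P ∈ S₊ⁿ and η > 0. If f is a C¹ vector field with Jacobian Df such that for all x, ⟨P Df(x)⟩ + 2ηP ⪯ 0, then the flow of ẋ = f(x) is a contraction with rate η in the norm ‖·‖_P, i.e., any two solutions x⁽¹⁾, x⁽²⁾ of ẋ = f(x) satisfy ‖x⁽¹⁾(t) − x⁽²⁾(t)‖_P ≤ e^{−η(t−s)}‖x⁽¹⁾(s) − x⁽²⁾(s)‖_P for t ≥ s. -/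
open Matrix

section Aux
variable {n : ℕ}

lemma hasDerivAt_dot (u w : ℝ → Fin n → ℝ) (u' w' : Fin n → ℝ) (t : ℝ)
    (hu : HasDerivAt u u' t) (hw : HasDerivAt w w' t) :
    HasDerivAt (fun t => u t ⬝ᵥ w t) (u' ⬝ᵥ w t + u t ⬝ᵥ w') t := by
  simp only [dotProduct]
  rw [← Finset.sum_add_distrib]
  exact HasDerivAt.fun_sum fun i _ =>
    ((hasDerivAt_pi.1 hu i).mul (hasDerivAt_pi.1 hw i))

lemma hasDerivAt_mulVec (P : Matrix (Fin n) (Fin n) ℝ) (w : ℝ → Fin n → ℝ) (w' : Fin n → ℝ)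
    (t : ℝ) (hw : HasDerivAt w w' t) :
    HasDerivAt (fun t => P *ᵥ (w t)) (P *ᵥ w') t := by
  have := (LinearMap.toContinuousLinearMap P.mulVecLin).hasFDerivAt.comp_hasDerivAt t hw
  exact this

lemma symm_dot (P : Matrix (Fin n) (Fin n) ℝ) (hP : Pᵀ = P) (u v : Fin n → ℝ) :
    u ⬝ᵥ P *ᵥ v = v ⬝ᵥ P *ᵥ u := by
  rw [dotProduct_mulVec, ← hP, vecMul_transpose, dotProduct_comm, hP]

lemma psd_key {η : ℝ} (P A : Matrix (Fin n) (Fin n) ℝ)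
    (h : (-(P * A + (P * A)ᵀ + (2 * η) • P)).PosSemidef) (e : Fin n → ℝ) :
    2 * (e ⬝ᵥ P *ᵥ (A *ᵥ e)) + 2 * η * (e ⬝ᵥ P *ᵥ e) ≤ 0 := by
  have h2 := h.dotProduct_mulVec_nonneg e
  simp only [star_trivial, neg_mulVec, add_mulVec, smul_mulVec, dotProduct_neg,
    dotProduct_add, dotProduct_smul, smul_eq_mul] at h2
  have e1 : e ⬝ᵥ (P * A) *ᵥ e = e ⬝ᵥ P *ᵥ (A *ᵥ e) := by rw [← mulVec_mulVec]
  have e2 : e ⬝ᵥ (P * A)ᵀ *ᵥ e = e ⬝ᵥ P *ᵥ (A *ᵥ e) := by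
    rw [dotProduct_mulVec, vecMul_transpose, dotProduct_comm, ← mulVec_mulVec]
  rw [e1, e2] at h2
  nlinarith [h2]

end Aux

theorem stmt16 {n : ℕ} (P : Matrix (Fin n) (Fin n) ℝ) (hP : P.PosDef) (η : ℝ) (hη : 0 < η)
    (f : (Fin n → ℝ) → (Fin n → ℝ)) (Df : (Fin n → ℝ) → Matrix (Fin n) (Fin n) ℝ)
    (hdiff : ∀ x, HasFDerivAt f (LinearMap.toContinuousLinearMap ((Df x).mulVecLin)) x)
    (hLMI : ∀ x, (-(P * Df x + (P * Df x)ᵀ + (2 * η) • P)).PosSemidef)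
    (x₁ x₂ : ℝ → (Fin n → ℝ))
    (hx₁ : ∀ t, HasDerivAt x₁ (f (x₁ t)) t) (hx₂ : ∀ t, HasDerivAt x₂ (f (x₂ t)) t)
    (s t : ℝ) (hst : s ≤ t) :
    Real.sqrt ((x₁ t - x₂ t) ⬝ᵥ P.mulVec (x₁ t - x₂ t)) ≤
      Real.exp (-η * (t - s)) * Real.sqrt ((x₁ s - x₂ s) ⬝ᵥ P.mulVec (x₁ s - x₂ s)) := by
  have hPsymm : Pᵀ = P := hP.1
  -- Key incremental inequality
  have key : ∀ a b : Fin n → ℝ,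
      2 * ((a - b) ⬝ᵥ P *ᵥ (f a - f b)) ≤ -(2 * η) * ((a - b) ⬝ᵥ P *ᵥ (a - b)) := by
    intro a b
    set e : Fin n → ℝ := a - b with he
    set g : ℝ → ℝ := fun r => 2 * (e ⬝ᵥ P *ᵥ (f (b + r • e))) + 2 * η * r * (e ⬝ᵥ P *ᵥ e)
      with hg
    have hgd : ∀ r : ℝ, HasDerivAt g
        (2 * (e ⬝ᵥ P *ᵥ ((Df (b + r • e)) *ᵥ e)) + 2 * η * (e ⬝ᵥ P *ᵥ e)) r := by
      intro r
      have hline : HasDerivAt (fun r : ℝ => b + r • e) e r := by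
        simpa using ((hasDerivAt_id r).smul_const e).const_add b
      have hF : HasDerivAt (fun r : ℝ => f (b + r • e)) ((Df (b + r • e)) *ᵥ e) r := by
        have := (hdiff (b + r • e)).comp_hasDerivAt r hline
        exact this
      have hPF : HasDerivAt (fun r : ℝ => P *ᵥ (f (b + r • e)))
          (P *ᵥ ((Df (b + r • e)) *ᵥ e)) r := hasDerivAt_mulVec P _ _ r hF
      have hdot : HasDerivAt (fun r : ℝ => e ⬝ᵥ P *ᵥ (f (b + r • e)))
          (e ⬝ᵥ P *ᵥ ((Df (b + r • e)) *ᵥ e)) r := by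
        have := hasDerivAt_dot (fun _ => e) (fun r => P *ᵥ (f (b + r • e))) 0 _ r
          (hasDerivAt_const r e) hPF
        simpa only [zero_dotProduct, zero_add] using this
      have h2 : HasDerivAt (fun r : ℝ => 2 * η * r * (e ⬝ᵥ P *ᵥ e))
          (2 * η * (e ⬝ᵥ P *ᵥ e)) r := by
        have h := ((hasDerivAt_id r).const_mul (2 * η)).mul_const (e ⬝ᵥ P *ᵥ e)
        simp only [id_eq, mul_one] at h
        exact h
      exact (hdot.const_mul 2).add h2
    have hanti : Antitone g := by
      apply antitone_of_deriv_nonpos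
      · intro r; exact (hgd r).differentiableAt
      · intro r
        rw [(hgd r).deriv]
        exact psd_key P (Df (b + r • e)) (hLMI (b + r • e)) e
    have h01 := hanti (by norm_num : (0:ℝ) ≤ 1)
    have hg0 : g 0 = 2 * (e ⬝ᵥ P *ᵥ f b) := by simp [hg]
    have hg1 : g 1 = 2 * (e ⬝ᵥ P *ᵥ f a) + 2 * η * (e ⬝ᵥ P *ᵥ e) := by
      simp [hg, he]
    rw [hg1, hg0] at h01
    have : e ⬝ᵥ P *ᵥ (f a - f b) = e ⬝ᵥ P *ᵥ f a - e ⬝ᵥ P *ᵥ f b := by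
      rw [mulVec_sub, dotProduct_sub]
    rw [this]; linarith
  -- Gronwall
  set V : ℝ → ℝ := fun t => (x₁ t - x₂ t) ⬝ᵥ P *ᵥ (x₁ t - x₂ t) with hV
  have hVd : ∀ t : ℝ, HasDerivAt V
      (2 * ((x₁ t - x₂ t) ⬝ᵥ P *ᵥ (f (x₁ t) - f (x₂ t)))) t := by
    intro t
    have he : HasDerivAt (fun t => x₁ t - x₂ t) (f (x₁ t) - f (x₂ t)) t :=
      (hx₁ t).sub (hx₂ t)
    have := hasDerivAt_dot (fun t => x₁ t - x₂ t) (fun t => P *ᵥ (x₁ t - x₂ t)) _ _ t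
      he (hasDerivAt_mulVec P _ _ t he)
    have hsymm : (f (x₁ t) - f (x₂ t)) ⬝ᵥ P *ᵥ (x₁ t - x₂ t)
        = (x₁ t - x₂ t) ⬝ᵥ P *ᵥ (f (x₁ t) - f (x₂ t)) := symm_dot P hPsymm _ _
    rw [hsymm] at this
    convert this using 1
    ring
  set W : ℝ → ℝ := fun t => Real.exp (2 * η * t) * V t with hW
  have hWd : ∀ t : ℝ, HasDerivAt W
      (2 * η * Real.exp (2 * η * t) * V t
        + Real.exp (2 * η * t) * (2 * ((x₁ t - x₂ t) ⬝ᵥ P *ᵥ (f (x₁ t) - f (x₂ t))))) t := by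
    intro t
    have hexp : HasDerivAt (fun t : ℝ => Real.exp (2 * η * t)) (2 * η * Real.exp (2 * η * t)) t := by
      have h := ((hasDerivAt_id t).const_mul (2 * η)).exp
      simp only [id_eq, mul_one] at h
      rw [mul_comm (Real.exp (2 * η * t))] at h
      exact h
    exact hexp.mul (hVd t)
  have hWanti : Antitone W := by
    apply antitone_of_deriv_nonpos
    · intro r; exact (hWd r).differentiableAt
    · intro r
      rw [(hWd r).deriv]
      have hk := key (x₁ r) (x₂ r)
      have hE := Real.exp_pos (2 * η * r)
      nlinarith [hk, hE.le, mul_le_mul_of_nonneg_left hk hE.le]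
  have hWst := hWanti hst
  have hVpos : ∀ r : ℝ, 0 ≤ V r := by
    intro r
    have h := hP.posSemidef.dotProduct_mulVec_nonneg (x₁ r - x₂ r)
    simpa only [star_trivial] using h
  have hVt : V t ≤ Real.exp (-(2 * η) * (t - s)) * V s := by
    have hE : (0:ℝ) < Real.exp (2 * η * t) := Real.exp_pos _
    have hWst' : Real.exp (2 * η * t) * V t ≤ Real.exp (2 * η * s) * V s := hWst
    have heq : Real.exp (-(2 * η) * (t - s)) * V s
        = (Real.exp (2 * η * s) * V s) / Real.exp (2 * η * t) := by
      rw [eq_div_iff hE.ne', mul_right_comm, ← Real.exp_add]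
      have : -(2 * η) * (t - s) + 2 * η * t = 2 * η * s := by ring
      rw [this]
    rw [heq, le_div_iff₀ hE]
    calc V t * Real.exp (2 * η * t) = Real.exp (2 * η * t) * V t := by ring
    _ ≤ Real.exp (2 * η * s) * V s := hWst'
  calc Real.sqrt (V t) ≤ Real.sqrt (Real.exp (-(2 * η) * (t - s)) * V s) :=
        Real.sqrt_le_sqrt hVt
    _ = Real.exp (-η * (t - s)) * Real.sqrt (V s) := by
        rw [Real.sqrt_mul (Real.exp_nonneg _)]
        congr 1
        rw [show (-(2 * η) * (t - s)) = (-η * (t - s)) + (-η * (t - s)) by ring,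
          Real.exp_add, Real.sqrt_mul_self (Real.exp_nonneg _)]
end
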